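/- Let N ≥ 1 and x, x' ∈ ℝ^N, and let ψ(x), ψ(x') : (Fin N → Fin 2) → ℂ be the angle-encoded product states ψ(x)(s) := ∏ⱼ (cos xⱼ if s j = 0 else sin xⱼ). Let U be a unitary on the 2^N-dimensional space of functions (Fin N → Fin 2) → ℂ and let Z be Hermitian with operator norm ‖Z‖_op ≤ 1, and set y := ⟨Uψ(x), Z Uψ(x)⟩ (real). If 4·Σⱼ (xⱼ − x'ⱼ)² < y², then y and y' := ⟨Uψ(x'), Z Uψ(x')⟩ are either both positive or both negative. That is, an angle-encoding quantum classifier is robust to any classical perturbation x ↦ x' with Σⱼ(xⱼ − x'ⱼ)² < y²/4 (in particular to perturbations with max_j |xⱼ − x'ⱼ| < |y|/(2√N)). -/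

import Mathlib

open Matrix

/-- The angle-encoded product state `ψ(x)(s) = ∏ⱼ (cos xⱼ if s j = 0 else sin xⱼ)`,
which equals `⊗ⱼ exp(-i xⱼ σ_y)|0⟩`. -/
noncomputable def angleState {N : ℕ} (x : Fin N → ℝ) : (Fin N → Fin 2) → ℂ :=
  fun s => ∏ j, (if s j = 0 then (Real.cos (x j) : ℂ) else (Real.sin (x j) : ℂ))

/-!
The overlap of two angle-encoded states factorises over the qubits,
`⟪ψ(x), ψ(x')⟫ = ∏ⱼ cos (xⱼ - x'ⱼ)`, and `1 - ∏ⱼ cos tⱼ ≤ Σⱼ (1 - cos tⱼ) ≤ Σⱼ tⱼ² / 2`, so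
`‖ψ(x) - ψ(x')‖² = 2 - 2 ∏ⱼ cos (xⱼ - x'ⱼ) ≤ Σⱼ (xⱼ - x'ⱼ)²`. The unitary `U` preserves this
distance, and for unit vectors and `‖Z‖ ≤ 1` the expectation `⟪φ, Z φ⟫` is `2`-Lipschitz in `φ`.
Hence `(y - y')² ≤ 4 Σⱼ (xⱼ - x'ⱼ)² < y²`, which forces `y'` to have the sign of `y`.
-/

open WithLp
open scoped InnerProductSpace

theorem Finset.one_sub_prod_le_sum_one_sub {ι R : Type*} [CommRing R] [LinearOrder R]
    [IsStrictOrderedRing R] (s : Finset ι) {a : ι → R} (ha : ∀ i ∈ s, |a i| ≤ 1) :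
    1 - ∏ i ∈ s, a i ≤ ∑ i ∈ s, (1 - a i) := by
  classical
  induction s using Finset.induction with
  | empty => simp
  | insert c s hc ih =>
    rw [Finset.prod_insert hc, Finset.sum_insert hc]
    have hs : ∀ i ∈ s, |a i| ≤ 1 := fun i hi => ha i (Finset.mem_insert_of_mem hi)
    have hprod : ∏ i ∈ s, a i ≤ 1 :=
      (le_abs_self _).trans <| (Finset.abs_prod s a).trans_le <|
        Finset.prod_le_one (fun i _ => abs_nonneg _) hs
    have hac : a c ≤ 1 := (le_abs_self _).trans (ha c (Finset.mem_insert_self c s))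
    -- `(1 - a) + (1 - P) - (1 - a P) = (1 - a) (1 - P) ≥ 0`
    nlinarith [mul_nonneg (sub_nonneg.2 hac) (sub_nonneg.2 hprod), ih hs]

theorem same_sign_of_sq_sub_lt_sq {y y' : ℝ} (h : (y - y') ^ 2 < y ^ 2) :
    (0 < y ∧ 0 < y') ∨ (y < 0 ∧ y' < 0) := by
  rcases lt_trichotomy y 0 with hy | rfl | hy
  · exact Or.inr ⟨hy, by nlinarith⟩
  · nlinarith
  · exact Or.inl ⟨hy, by nlinarith⟩

theorem norm_inner_map_self_sub_inner_map_self_le {𝕜 E : Type*} [RCLike 𝕜]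
    [NormedAddCommGroup E] [InnerProductSpace 𝕜 E] (T : E →L[𝕜] E) (a b : E) :
    ‖⟪a, T a⟫_𝕜 - ⟪b, T b⟫_𝕜‖ ≤ ‖T‖ * (‖a‖ + ‖b‖) * ‖a - b‖ := by
  have hsplit : ⟪a, T a⟫_𝕜 - ⟪b, T b⟫_𝕜 = ⟪a - b, T a⟫_𝕜 + ⟪b, T (a - b)⟫_𝕜 := by
    rw [inner_sub_left, map_sub, inner_sub_right]; ring
  calc ‖⟪a, T a⟫_𝕜 - ⟪b, T b⟫_𝕜‖
      ≤ ‖a - b‖ * ‖T a‖ + ‖b‖ * ‖T (a - b)‖ := by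
        rw [hsplit]
        exact (norm_add_le _ _).trans (add_le_add (norm_inner_le_norm _ _) (norm_inner_le_norm _ _))
    _ ≤ ‖a - b‖ * (‖T‖ * ‖a‖) + ‖b‖ * (‖T‖ * ‖a - b‖) := by
        gcongr <;> exact T.le_opNorm _
    _ = ‖T‖ * (‖a‖ + ‖b‖) * ‖a - b‖ := by ring

theorem star_dotProduct_mulVec_eq_inner {n : Type*} [Fintype n] [DecidableEq n]
    (Z : Matrix n n ℂ) (v : n → ℂ) :
    star v ⬝ᵥ Z *ᵥ v = ⟪toLp 2 v, toEuclideanCLM (𝕜 := ℂ) Z (toLp 2 v)⟫_ℂ := by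
  rw [toEuclideanCLM_toLp, EuclideanSpace.inner_toLp_toLp, dotProduct_comm]

theorem norm_toLp_mulVec_of_mem_unitaryGroup {n : Type*} [Fintype n] [DecidableEq n]
    {U : Matrix n n ℂ} (hU : U ∈ unitaryGroup n ℂ) (v : n → ℂ) :
    ‖toLp 2 (U *ᵥ v)‖ = ‖toLp 2 v‖ :=
  ContinuousLinearMap.norm_map_of_mem_unitary (Unitary.map_mem (toEuclideanCLM (𝕜 := ℂ)) hU) _

theorem inner_toLp_angleState {N : ℕ} (x x' : Fin N → ℝ) :
    ⟪toLp 2 (angleState x), toLp 2 (angleState x')⟫_ℂ =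
      ((∏ j, Real.cos (x j - x' j) : ℝ) : ℂ) := by
  let f : Fin N → Fin 2 → ℂ := fun j i =>
    if i = 0 then Real.cos (x j) * Real.cos (x' j) else Real.sin (x j) * Real.sin (x' j)
  calc ⟪toLp 2 (angleState x), toLp 2 (angleState x')⟫_ℂ
      = ∑ s : Fin N → Fin 2, ∏ j, f j (s j) := by
        rw [EuclideanSpace.inner_toLp_toLp, dotProduct_comm]
        refine Finset.sum_congr rfl fun s _ => ?_
        simp only [angleState, Pi.star_apply, star_prod, ← Finset.prod_mul_distrib, f]
        refine Finset.prod_congr rfl fun j _ => ?_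
        split_ifs <;> simp only [RCLike.star_def, Complex.conj_ofReal]
    _ = ∏ j, ∑ i, f j i := (Fintype.prod_sum f).symm
    _ = _ := by
        push_cast
        refine Finset.prod_congr rfl fun j _ => ?_
        simp [f, Fin.sum_univ_two, Complex.cos_sub]

theorem norm_toLp_angleState {N : ℕ} (x : Fin N → ℝ) : ‖toLp 2 (angleState x)‖ = 1 := by
  have h : ‖toLp 2 (angleState x)‖ ^ 2 = 1 := by
    rw [@norm_sq_eq_re_inner ℂ, inner_toLp_angleState]
    simp
  exact (pow_eq_one_iff_of_nonneg (norm_nonneg _) two_ne_zero).1 h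

theorem norm_toLp_angleState_sub_sq_le {N : ℕ} (x x' : Fin N → ℝ) :
    ‖toLp 2 (angleState x) - toLp 2 (angleState x')‖ ^ 2 ≤ ∑ j, (x j - x' j) ^ 2 := by
  have hprod := Finset.univ.one_sub_prod_le_sum_one_sub
    (a := fun j => Real.cos (x j - x' j)) fun j _ => Real.abs_cos_le_one _
  have hcos : ∑ j, (1 - Real.cos (x j - x' j)) ≤ (∑ j, (x j - x' j) ^ 2) / 2 := by
    rw [Finset.sum_div]
    exact Finset.sum_le_sum fun j _ => by
      linarith [Real.one_sub_sq_div_two_le_cos (x := x j - x' j)]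
  rw [@norm_sub_sq ℂ, norm_toLp_angleState, norm_toLp_angleState, inner_toLp_angleState,
    RCLike.re_to_complex, Complex.ofReal_re]
  linarith

theorem stmt19_general {N : ℕ} (x x' : Fin N → ℝ)
    (U Z : Matrix (Fin N → Fin 2) (Fin N → Fin 2) ℂ)
    (hU : U ∈ Matrix.unitaryGroup (Fin N → Fin 2) ℂ)
    (hZnorm : ‖Matrix.toEuclideanCLM (𝕜 := ℂ) Z‖ ≤ 1)
    (h : 4 * ∑ j, (x j - x' j) ^ 2
        < ((star (U.mulVec (angleState x)) ⬝ᵥ Z.mulVec (U.mulVec (angleState x))).re) ^ 2) :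
    (0 < (star (U.mulVec (angleState x)) ⬝ᵥ Z.mulVec (U.mulVec (angleState x))).re ∧
        0 < (star (U.mulVec (angleState x')) ⬝ᵥ Z.mulVec (U.mulVec (angleState x'))).re) ∨
      ((star (U.mulVec (angleState x)) ⬝ᵥ Z.mulVec (U.mulVec (angleState x))).re < 0 ∧
        (star (U.mulVec (angleState x')) ⬝ᵥ Z.mulVec (U.mulVec (angleState x'))).re < 0) := by
  apply same_sign_of_sq_sub_lt_sq
  set φ := toLp 2 (U *ᵥ angleState x)
  set φ' := toLp 2 (U *ᵥ angleState x')
  have hφ : ‖φ‖ = 1 := (norm_toLp_mulVec_of_mem_unitaryGroup hU _).trans (norm_toLp_angleState x)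
  have hφ' : ‖φ'‖ = 1 :=
    (norm_toLp_mulVec_of_mem_unitaryGroup hU _).trans (norm_toLp_angleState x')
  have hdist : ‖φ - φ'‖ ^ 2 ≤ ∑ j, (x j - x' j) ^ 2 := by
    rw [← toLp_sub, ← mulVec_sub, norm_toLp_mulVec_of_mem_unitaryGroup hU, toLp_sub]
    exact norm_toLp_angleState_sub_sq_le x x'
  have hre : |(star (U *ᵥ angleState x) ⬝ᵥ Z *ᵥ U *ᵥ angleState x).re
      - (star (U *ᵥ angleState x') ⬝ᵥ Z *ᵥ U *ᵥ angleState x').re| ≤ 2 * ‖φ - φ'‖ := by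
    rw [← Complex.sub_re, star_dotProduct_mulVec_eq_inner, star_dotProduct_mulVec_eq_inner]
    refine (Complex.abs_re_le_norm _).trans <|
      (norm_inner_map_self_sub_inner_map_self_le _ φ φ').trans ?_
    rw [hφ, hφ']
    nlinarith [norm_nonneg (φ - φ')]
  calc _ ≤ (2 * ‖φ - φ'‖) ^ 2 := sq_le_sq' (abs_le.1 hre).1 (abs_le.1 hre).2
    _ = 4 * ‖φ - φ'‖ ^ 2 := by ring
    _ ≤ 4 * ∑ j, (x j - x' j) ^ 2 := by gcongr
    _ < _ := h

/-- An angle-encoding quantum classifier is robust to any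
classical perturbation `x ↦ x'` with `4 Σⱼ (xⱼ - x'ⱼ)² < y²`: the predictions
`y = ⟨Uψ(x), Z Uψ(x)⟩` and `y' = ⟨Uψ(x'), Z Uψ(x')⟩` have the same sign. -/
theorem stmt19 {N : ℕ} (hN : 1 ≤ N) (x x' : Fin N → ℝ)
    (U Z : Matrix (Fin N → Fin 2) (Fin N → Fin 2) ℂ)
    (hU : U ∈ Matrix.unitaryGroup (Fin N → Fin 2) ℂ)
    (hZ : Z.IsHermitian)
    (hZnorm : ‖Matrix.toEuclideanCLM (𝕜 := ℂ) Z‖ ≤ 1)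
    (h : 4 * ∑ j, (x j - x' j) ^ 2
        < ((star (U.mulVec (angleState x)) ⬝ᵥ Z.mulVec (U.mulVec (angleState x))).re) ^ 2) :
    (0 < (star (U.mulVec (angleState x)) ⬝ᵥ Z.mulVec (U.mulVec (angleState x))).re ∧
        0 < (star (U.mulVec (angleState x')) ⬝ᵥ Z.mulVec (U.mulVec (angleState x'))).re) ∨
      ((star (U.mulVec (angleState x)) ⬝ᵥ Z.mulVec (U.mulVec (angleState x))).re < 0 ∧
        (star (U.mulVec (angleState x')) ⬝ᵥ Z.mulVec (U.mulVec (angleState x'))).re < 0) :=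
  stmt19_general x x' U Z hU hZnorm h
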